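/- arXiv:2411.04846 — 5 statements merged into one kernel-verified Lean document; each statement's English description precedes it below -/
import Mathlib

section
/- For every graph G, the minimum number of operations to turn G into a disjoint union of 2-clubs using only vertex splits is at least the minimum using both edge deletions and vertex splits, and at most twice that quantity; that is, 2ccedvs(G) ≤ 2ccvs(G) ≤ 2·2ccedvs(G). -/
open SimpleGraph

/-- `H` is obtained from `G` by splitting vertex `v` into two copies `v` and `v'`
(where `v'` was an isolated vertex), with `N(v₁) ∪ N(v₂) = N(v)`. -/
def IsSplitAt {V : Type*} (v v' : V) (G H : SimpleGraph V) : Prop :=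
  v ≠ v' ∧ G.neighborSet v' = ∅ ∧ ¬ H.Adj v v' ∧
  (∀ x y : V, x ≠ v → x ≠ v' → y ≠ v → y ≠ v' → (H.Adj x y ↔ G.Adj x y)) ∧
  (∀ x : V, x ≠ v → x ≠ v' → ((H.Adj v x ∨ H.Adj v' x) ↔ G.Adj v x))

/-- `H` is obtained from `G` by a single vertex split. -/
def IsSplit {V : Type*} (G H : SimpleGraph V) : Prop :=
  ∃ v v', IsSplitAt v v' G H

/-- `H` is obtained from `G` by deleting a single (existing) edge. -/
def IsEdgeDeletion {V : Type*} (G H : SimpleGraph V) : Prop :=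
  ∃ u v : V, G.Adj u v ∧ H = G.deleteEdges {s(u, v)}

/-- Editing operations: edge deletion, or vertex split (recording the split vertex
and the name of the new copy). -/
inductive Op where
  | del : ℕ → ℕ → Op
  | split : ℕ → ℕ → Op

/-- Semantics of one operation. -/
def OpApplies : Op → SimpleGraph ℕ → SimpleGraph ℕ → Prop
  | Op.del u v, G, H => G.Adj u v ∧ H = G.deleteEdges {s(u, v)}
  | Op.split v v', G, H => IsSplitAt v v' G H

/-- Applying a list of operations in order. -/
def OpsApply : List Op → SimpleGraph ℕ → SimpleGraph ℕ → Prop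
  | [], G, H => H = G
  | o :: l, G, H => ∃ G', OpApplies o G G' ∧ OpsApply l G' H

def IsSplitOp : Op → Prop
  | Op.split _ _ => True
  | Op.del _ _ => False

/-- The set of vertices on which a split is performed in the list of operations. -/
def splitVerts (l : List Op) : Set ℕ := {v | ∃ v', Op.split v v' ∈ l}

/-- `G` is a disjoint union of 2-clubs: within each connected component all
distances are at most 2. -/
def Is2ClubGraph (G : SimpleGraph ℕ) : Prop :=
  ∀ u v : ℕ, G.Reachable u v → G.dist u v ≤ 2

/-- Minimum number of vertex splits turning `G` into a disjoint union of 2-clubs. -/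
noncomputable def twoCcvs (G : SimpleGraph ℕ) : ℕ :=
  sInf {k | ∃ l H, l.length = k ∧ (∀ o ∈ l, IsSplitOp o) ∧ OpsApply l G H ∧ Is2ClubGraph H}

/-- Minimum number of edge deletions and vertex splits turning `G` into a
disjoint union of 2-clubs. -/
noncomputable def twoCcedvs (G : SimpleGraph ℕ) : ℕ :=
  sInf {k | ∃ l H, l.length = k ∧ OpsApply l G H ∧ Is2ClubGraph H}

/-- The subgraph of `G` induced on `s` (kept on the same vertex type, all
vertices outside `s` becoming isolated). -/
def inducedOn (G : SimpleGraph ℕ) (s : Set ℕ) : SimpleGraph ℕ where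
  Adj x y := G.Adj x y ∧ x ∈ s ∧ y ∈ s
  symm := ⟨fun x y h => ⟨h.1.symm, h.2.2, h.2.1⟩⟩
  loopless := ⟨fun x h => G.loopless.irrefl x h.1⟩

/-- The set `s` induces a 2-club in `G` (connected, diameter at most 2). -/
def Inducing2Club (G : SimpleGraph ℕ) (s : Set ℕ) : Prop :=
  ∀ u ∈ s, ∀ v ∈ s, (inducedOn G s).Reachable u v ∧ (inducedOn G s).dist u v ≤ 2

/-- The path with vertices `0, 1, …, m` (length `m`). -/
def pathG (m : ℕ) : SimpleGraph ℕ :=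
  SimpleGraph.fromRel (fun i j => j = i + 1 ∧ j ≤ m)

/-- The cycle with vertices `0, 1, …, n-1`. -/
def cycleG (n : ℕ) : SimpleGraph ℕ :=
  SimpleGraph.fromRel (fun i j => i < n ∧ j = (i + 1) % n)

/-!
A sequence of vertex splits is in particular an editing sequence, which gives the lower bound.
For the upper bound, the deletion of an edge `uv` is simulated by two splits: split `u` so that a
fresh copy `a` takes over only the neighbour `v`, then split `v` so that a fresh copy `b` takes
over only `a`. The result is `G - uv` together with an isolated edge `ab` on fresh vertices; this
edge is a 2-club, is untouched by all later operations, and stays a separate component.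

Finiteness of the support supplies the fresh vertices, and it makes some editing sequence exist
(delete every edge), so both infima are attained rather than junk values `sInf ∅ = 0`.
-/

namespace SimpleGraph

variable {V : Type*} {G K : SimpleGraph V} {u v a b : V}

lemma support_sup : (G ⊔ K).support = G.support ∪ K.support := by
  ext x
  simp only [mem_support, sup_adj, exists_or, Set.mem_union]

lemma support_edge_subset : (edge a b).support ⊆ {a, b} := by
  intro x hx
  obtain ⟨y, hxy⟩ := (mem_support _).mp hx
  rw [edge_adj] at hxy
  rcases hxy with ⟨⟨rfl, -⟩ | ⟨rfl, -⟩, -⟩ <;> simp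

lemma edgeSet_finite_of_support_finite (hG : G.support.Finite) : G.edgeSet.Finite := by
  refine ((hG.prod hG).image Sym2.mk.uncurry).subset ?_
  intro e he
  induction e using Sym2.ind with
  | h x y =>
    have hxy : G.Adj x y := he
    exact ⟨(x, y), ⟨hxy.mem_support_left, hxy.mem_support_right⟩, rfl⟩

lemma Reachable.eq_of_notMem_support (h : G.Reachable u v) (hu : u ∉ G.support) : u = v := by
  by_contra huv
  exact hu (mem_support_of_reachable huv h)

lemma Reachable.of_sup_of_disjoint (hd : Disjoint G.support K.support)
    (h : (G ⊔ K).Reachable u v) : G.Reachable u v ∨ K.Reachable u v := by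
  obtain ⟨p⟩ := h
  induction p with
  | nil => exact Or.inl (Reachable.refl _)
  | @cons x m y hxm p ih =>
    rcases hxm with hxm | hxm <;> rcases ih with ih | ih
    · exact Or.inl (hxm.reachable.trans ih)
    · obtain rfl := ih.eq_of_notMem_support (hd.notMem_of_mem_left hxm.mem_support_right)
      exact Or.inl hxm.reachable
    · obtain rfl := ih.eq_of_notMem_support (hd.notMem_of_mem_right hxm.mem_support_right)
      exact Or.inr hxm.reachable
    · exact Or.inr (hxm.reachable.trans ih)

end SimpleGraph

section Split

variable {V : Type*} {G H K : SimpleGraph V} {u v v' a b : V}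

lemma IsSplitAt.support_subset (h : IsSplitAt v v' G H) : H.support ⊆ G.support ∪ {v, v'} := by
  obtain ⟨-, -, -, hrest, hv⟩ := h
  rintro x ⟨y, hxy⟩
  by_cases hx : x = v ∨ x = v'
  · right; simpa using hx
  push Not at hx
  left
  by_cases hy : y = v ∨ y = v'
  · refine ⟨v, ((hv x hx.1 hx.2).mp ?_).symm⟩
    rcases hy with rfl | rfl
    exacts [Or.inl hxy.symm, Or.inr hxy.symm]
  push Not at hy
  exact ⟨y, (hrest x y hx.1 hx.2 hy.1 hy.2).mp hxy⟩

lemma IsSplitAt.sup (h : IsSplitAt v v' G H) (hv : v ∉ K.support) (hv' : v' ∉ K.support) :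
    IsSplitAt v v' (G ⊔ K) (H ⊔ K) := by
  obtain ⟨hne, hiso, hnadj, hrest, hnbr⟩ := h
  have hKv : ∀ x, ¬ K.Adj v x := fun x hx => hv ⟨x, hx⟩
  have hKv' : ∀ x, ¬ K.Adj v' x := fun x hx => hv' ⟨x, hx⟩
  refine ⟨hne, ?_, ?_, ?_, ?_⟩
  · ext x
    simp only [mem_neighborSet, sup_adj, hKv', or_false, Set.mem_empty_iff_false, iff_false]
    exact fun hx => hiso.subset hx
  · simpa [hKv] using hnadj
  · intro x y hxv hxv' hyv hyv'
    simp only [sup_adj, hrest x y hxv hxv' hyv hyv']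
  · intro x hxv hxv'
    simpa [hKv, hKv'] using hnbr x hxv hxv'

lemma isSplitAt_deleteEdges_sup_edge (huv : G.Adj u v) (ha : a ∉ G.support) :
    IsSplitAt u a G (G.deleteEdges {s(u, v)} ⊔ edge a v) := by
  have hGa : ∀ x, ¬ G.Adj a x := fun x hx => ha ⟨x, hx⟩
  have hGa' : ∀ x, ¬ G.Adj x a := fun x hx => hGa x hx.symm
  have hau : a ≠ u := fun h => ha (h ▸ huv.mem_support_left)
  have hav : a ≠ v := fun h => ha (h ▸ huv.mem_support_right)
  refine ⟨hau.symm, ?_, ?_, ?_, ?_⟩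
  · ext x; simpa using hGa x
  · simp [edge_adj, hau.symm, huv.ne, hGa']
  · intro x y hxu hxa hyu hya
    simp [edge_adj, hxa, hya, hxu, hyu]
  · intro x hxu hxa
    by_cases hxv : x = v
    · subst hxv; simp [edge_adj, huv, hav]
    · simp [edge_adj, hxv, hxa, hGa, hxu, Ne.symm hxu]

lemma exists_isSplitAt_isSplitAt_deleteEdges (huv : G.Adj u v) (ha : a ∉ G.support)
    (hb : b ∉ G.support) (hab : a ≠ b) :
    ∃ G', IsSplitAt u a G G' ∧ IsSplitAt v b G' (G.deleteEdges {s(u, v)} ⊔ edge a b) := by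
  have hav : a ≠ v := fun h => ha (h ▸ huv.mem_support_right)
  have hbv : b ≠ v := fun h => hb (h ▸ huv.mem_support_right)
  have hGa : ∀ x, ¬ G.Adj a x := fun x hx => ha ⟨x, hx⟩
  have hGa' : ∀ x, ¬ G.Adj x a := fun x hx => hGa x hx.symm
  set G' := G.deleteEdges {s(u, v)} ⊔ edge a v
  have hG'va : G'.Adj v a := Or.inr ((edge_adj _ _ _ _).mpr ⟨Or.inr ⟨rfl, rfl⟩, hav.symm⟩)
  have hb' : b ∉ G'.support := by
    rw [support_sup]
    rintro (hbG | hbe)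
    · exact hb (support_mono (deleteEdges_le _) hbG)
    · rcases support_edge_subset hbe with h | h
      exacts [hab h.symm, hbv h]
  refine ⟨G', isSplitAt_deleteEdges_sup_edge huv ha, ?_⟩
  convert isSplitAt_deleteEdges_sup_edge hG'va hb' using 1
  ext x y
  simp only [G', sup_adj, deleteEdges_adj, edge_adj, Set.mem_singleton_iff, Sym2.eq_iff]
  grind

end Split

def Op.verts : Op → List ℕ
  | .del u v => [u, v]
  | .split v v' => [v, v']

def opsVerts (l : List Op) : Set ℕ := {x | x ∈ l.flatMap Op.verts}

lemma opsVerts_finite (l : List Op) : (opsVerts l).Finite :=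
  List.finite_toSet _

@[simp] lemma opsVerts_cons (o : Op) (l : List Op) :
    opsVerts (o :: l) = {x | x ∈ o.verts} ∪ opsVerts l := by
  ext; simp [opsVerts]

section OpsApply

variable {G H K : SimpleGraph ℕ}

lemma OpApplies.support_subset {o : Op} (h : OpApplies o G H) :
    H.support ⊆ G.support ∪ {x | x ∈ o.verts} := by
  cases o with
  | del u v =>
    obtain ⟨-, rfl⟩ := h
    exact (support_mono (deleteEdges_le _)).trans Set.subset_union_left
  | split v v' =>
    refine (IsSplitAt.support_subset h).trans fun x hx => ?_
    simpa [Op.verts, or_comm, or_assoc] using hx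

lemma OpsApply.support_subset {l : List Op} (h : OpsApply l G H) :
    H.support ⊆ G.support ∪ opsVerts l := by
  induction l generalizing G with
  | nil => cases h; simp
  | cons o l ih =>
    obtain ⟨G', ho, hl⟩ := h
    refine (ih hl).trans ?_
    rw [opsVerts_cons, ← Set.union_assoc]
    exact Set.union_subset_union_left _ ho.support_subset

lemma OpApplies.sup {o : Op} (h : OpApplies o G H) (hK : ∀ x ∈ o.verts, x ∉ K.support) :
    OpApplies o (G ⊔ K) (H ⊔ K) := by
  cases o with
  | del u v =>
    obtain ⟨huv, rfl⟩ := h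
    have hKu : ∀ x, ¬ K.Adj u x := fun x hx => hK u (by simp [Op.verts]) ⟨x, hx⟩
    refine ⟨Or.inl huv, ?_⟩
    rw [deleteEdges_sup, (K.deleteEdges_eq_self).mpr]
    simpa [Set.disjoint_singleton_left] using hKu v
  | split v v' =>
    exact IsSplitAt.sup h (hK v (by simp [Op.verts])) (hK v' (by simp [Op.verts]))

lemma OpsApply.sup {l : List Op} (h : OpsApply l G H) (hK : Disjoint (opsVerts l) K.support) :
    OpsApply l (G ⊔ K) (H ⊔ K) := by
  induction l generalizing G with
  | nil => cases h; rfl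
  | cons o l ih =>
    obtain ⟨G', ho, hl⟩ := h
    rw [opsVerts_cons, Set.disjoint_union_left] at hK
    exact ⟨G' ⊔ K, ho.sup fun x hx => hK.1.notMem_of_mem_left hx, ih hl hK.2⟩

lemma OpsApply.append {l₁ l₂ : List Op} {G₁ G₂ G₃ : SimpleGraph ℕ}
    (h₁ : OpsApply l₁ G₁ G₂) (h₂ : OpsApply l₂ G₂ G₃) : OpsApply (l₁ ++ l₂) G₁ G₃ := by
  induction l₁ generalizing G₁ with
  | nil => cases h₁; exact h₂
  | cons o l ih =>
    obtain ⟨G', ho, hl⟩ := h₁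
    exact ⟨G', ho, ih hl⟩

lemma opsApply_split_split_deleteEdges {u v a b : ℕ} (huv : G.Adj u v) (ha : a ∉ G.support)
    (hb : b ∉ G.support) (hab : a ≠ b) :
    OpsApply [.split u a, .split v b] G (G.deleteEdges {s(u, v)} ⊔ edge a b) := by
  obtain ⟨G', h₁, h₂⟩ := exists_isSplitAt_isSplitAt_deleteEdges huv ha hb hab
  exact ⟨G', h₁, _, h₂, rfl⟩

end OpsApply

lemma is2ClubGraph_bot : Is2ClubGraph ⊥ := by
  intro u v h
  obtain rfl := reachable_bot.mp h
  simp

lemma is2ClubGraph_edge (a b : ℕ) : Is2ClubGraph (edge a b) := by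
  intro u v h
  by_cases huv : u = v
  · simp [huv]
  · have hu := support_edge_subset (mem_support_of_reachable huv h)
    have hv := support_edge_subset (mem_support_of_reachable (Ne.symm huv) h.symm)
    have hadj : (edge a b).Adj u v := by
      rw [edge_adj]
      simp only [Set.mem_insert_iff, Set.mem_singleton_iff] at hu hv
      grind
    rw [dist_eq_one_iff_adj.mpr hadj]
    omega

lemma Is2ClubGraph.sup_of_disjoint {G K : SimpleGraph ℕ} (hG : Is2ClubGraph G)
    (hK : Is2ClubGraph K) (hd : Disjoint G.support K.support) : Is2ClubGraph (G ⊔ K) := by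
  intro u v h
  rcases h.of_sup_of_disjoint hd with h | h
  · exact (h.dist_anti le_sup_left).trans (hG u v h)
  · exact (h.dist_anti le_sup_right).trans (hK u v h)

lemma exists_two_notMem {s : Set ℕ} (hs : s.Finite) : ∃ a b, a ∉ s ∧ b ∉ s ∧ a ≠ b := by
  obtain ⟨a, ha⟩ := hs.exists_notMem
  obtain ⟨b, hb⟩ := (hs.insert a).exists_notMem
  rw [Set.mem_insert_iff, not_or] at hb
  exact ⟨a, b, ha, hb.2, Ne.symm hb.1⟩

theorem OpsApply.exists_splits {l : List Op} {G H : SimpleGraph ℕ} (h : OpsApply l G H)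
    (hG : G.support.Finite) (hH : Is2ClubGraph H) :
    ∃ l' H', l'.length ≤ 2 * l.length ∧ (∀ o ∈ l', IsSplitOp o) ∧ OpsApply l' G H' ∧
      Is2ClubGraph H' := by
  induction l generalizing G H with
  | nil => exact ⟨[], H, le_rfl, by simp, h, hH⟩
  | cons o l ih =>
    obtain ⟨G', ho, hl⟩ := h
    cases o with
    | split v v' =>
      have hG' : G'.support.Finite :=
        (hG.union (List.finite_toSet _)).subset (OpApplies.support_subset ho)
      obtain ⟨l', H', hlen, hsplit, hl', hH'⟩ := ih hl hG' hH
      refine ⟨.split v v' :: l', H', by simp; omega, ?_, ⟨G', ho, hl'⟩, hH'⟩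
      exact List.forall_mem_cons.mpr ⟨trivial, hsplit⟩
    | del u v =>
      obtain ⟨huv, rfl⟩ := ho
      obtain ⟨a, b, ha, hb, hab⟩ := exists_two_notMem (hG.union (opsVerts_finite l))
      rw [Set.mem_union, not_or] at ha hb
      set G₀ := G.deleteEdges {s(u, v)}
      have hsplits := opsApply_split_split_deleteEdges huv ha.1 hb.1 hab
      have hG₁ : (G₀ ⊔ edge a b).support.Finite :=
        (hG.union (opsVerts_finite _)).subset hsplits.support_subset
      have hdisj : Disjoint (opsVerts l) (edge a b).support :=
        Set.disjoint_of_subset_right support_edge_subset (by simp [ha.2, hb.2])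
      have hH₁ : Is2ClubGraph (H ⊔ edge a b) := by
        refine hH.sup_of_disjoint (is2ClubGraph_edge a b)
          (Set.disjoint_of_subset hl.support_subset support_edge_subset ?_)
        have hG₀ : G₀.support ⊆ G.support := support_mono (deleteEdges_le _)
        simp only [Set.disjoint_insert_right, Set.disjoint_singleton_right, Set.mem_union, not_or]
        exact ⟨⟨fun h => ha.1 (hG₀ h), ha.2⟩, fun h => hb.1 (hG₀ h), hb.2⟩
      obtain ⟨l', H', hlen, hsplit, hl', hH'⟩ := ih (hl.sup hdisj) hG₁ hH₁
      refine ⟨.split u a :: .split v b :: l', H', by simp; omega, ?_,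
        hsplits.append hl', hH'⟩
      simpa [IsSplitOp] using hsplit

lemma exists_opsApply_bot {G : SimpleGraph ℕ} (hG : G.edgeSet.Finite) : ∃ l, OpsApply l G ⊥ := by
  generalize hE : G.edgeSet = s at hG
  induction s, hG using Set.Finite.induction_on generalizing G with
  | empty => exact ⟨[], (edgeSet_eq_empty.mp hE).symm⟩
  | @insert e s he hs ih =>
    induction e using Sym2.ind with
    | h u v =>
      have huv : G.Adj u v := by
        change s(u, v) ∈ G.edgeSet
        simp [hE]
      obtain ⟨l, hl⟩ := ih (G := G.deleteEdges {s(u, v)})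
        (by rw [edgeSet_deleteEdges, hE, Set.insert_sdiff_self_of_notMem he])
      exact ⟨.del u v :: l, _, ⟨huv, rfl⟩, hl⟩

section Minimum

variable {G H : SimpleGraph ℕ} {l : List Op}

lemma exists_length_eq_twoCcvs (hsplit : ∀ o ∈ l, IsSplitOp o) (hl : OpsApply l G H)
    (hH : Is2ClubGraph H) :
    ∃ l H, l.length = twoCcvs G ∧ (∀ o ∈ l, IsSplitOp o) ∧ OpsApply l G H ∧ Is2ClubGraph H :=
  Nat.sInf_mem (s := {k | ∃ (l : List Op) (H : SimpleGraph ℕ),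
    l.length = k ∧ (∀ o ∈ l, IsSplitOp o) ∧ OpsApply l G H ∧ Is2ClubGraph H})
    ⟨_, l, H, rfl, hsplit, hl, hH⟩

lemma exists_length_eq_twoCcedvs (hl : OpsApply l G H) (hH : Is2ClubGraph H) :
    ∃ l H, l.length = twoCcedvs G ∧ OpsApply l G H ∧ Is2ClubGraph H :=
  Nat.sInf_mem (s := {k | ∃ (l : List Op) (H : SimpleGraph ℕ),
    l.length = k ∧ OpsApply l G H ∧ Is2ClubGraph H}) ⟨_, l, H, rfl, hl, hH⟩

lemma twoCcvs_le_length (hsplit : ∀ o ∈ l, IsSplitOp o) (hl : OpsApply l G H)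
    (hH : Is2ClubGraph H) : twoCcvs G ≤ l.length :=
  Nat.sInf_le ⟨l, H, rfl, hsplit, hl, hH⟩

lemma twoCcedvs_le_length (hl : OpsApply l G H) (hH : Is2ClubGraph H) :
    twoCcedvs G ≤ l.length :=
  Nat.sInf_le ⟨l, H, rfl, hl, hH⟩

end Minimum

theorem stmt0 (G : SimpleGraph ℕ) (hfin : G.support.Finite) :
    twoCcedvs G ≤ twoCcvs G ∧ twoCcvs G ≤ 2 * twoCcedvs G := by
  obtain ⟨l₀, hl₀⟩ := exists_opsApply_bot (edgeSet_finite_of_support_finite hfin)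
  obtain ⟨l₁, H₁, -, hsplit₁, hl₁, hH₁⟩ := hl₀.exists_splits hfin is2ClubGraph_bot
  constructor
  · obtain ⟨l, H, hlen, -, hl, hH⟩ := exists_length_eq_twoCcvs hsplit₁ hl₁ hH₁
    exact hlen ▸ twoCcedvs_le_length hl hH
  · obtain ⟨l, H, hlen, hl, hH⟩ := exists_length_eq_twoCcedvs hl₀ is2ClubGraph_bot
    obtain ⟨l', H', hlen', hsplit', hl', hH'⟩ := hl.exists_splits hfin hH
    calc twoCcvs G ≤ l'.length := twoCcvs_le_length hsplit' hl' hH'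
      _ ≤ 2 * l.length := hlen'
      _ = 2 * twoCcedvs G := by rw [hlen]
end

section
/- Any edge deletion of an edge uv in a graph G can be simulated by two vertex splits: splitting u so that one copy has neighborhood {v}, then splitting v so that one copy has neighborhood equal to the copy of u; the resulting graph restricted to non-degenerate components has the same 2-club components as after deleting uv, plus an isolated edge component which is itself a 2-club. -/
open SimpleGraph

/-! Write `G = K ⊔ edge u v` with `K` the graph `G` without the edge `uv`. Moving one endpoint
`a` of an edge `ab` to a fresh isolated vertex `a'` is a split of `a` (the copy `a'` keeps only
the neighbour `b`). Doing this at `u` (turning `uv` into `u'v`) and then at `v` (turning `u'v`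
into `u'v'`) produces `K` together with the isolated edge `u'v'`. -/

namespace SimpleGraph

variable {V : Type*}

theorem deleteEdges_sup_edge_of_adj {G : SimpleGraph V} {u v : V} (h : G.Adj u v) :
    G.deleteEdges {s(u, v)} ⊔ edge u v = G := by
  ext x y
  simp only [sup_adj, deleteEdges_adj, Set.mem_singleton_iff, Sym2.eq_iff, edge_adj]
  grind [Adj.ne, adj_symm]

theorem IsIsolated.neighborSet_sup_edge {K : SimpleGraph V} {a b : V} (hK : K.IsIsolated a)
    (hab : a ≠ b) : (K ⊔ edge a b).neighborSet a = {b} := by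
  ext x
  simp only [mem_neighborSet, sup_adj, edge_adj, Set.mem_singleton_iff]
  grind [IsIsolated]

end SimpleGraph


theorem isSplitAt_sup_edge {V : Type*} {K : SimpleGraph V} {a a' b : V} (ha' : a ≠ a')
    (hab : a ≠ b) (ha'b : a' ≠ b) (hK : K.IsIsolated a') :
    IsSplitAt a a' (K ⊔ edge a b) (K ⊔ edge a' b) := by
  refine ⟨ha', ?_, ?_, ?_, ?_⟩
  · ext x
    simp only [mem_neighborSet, sup_adj, edge_adj, Set.mem_empty_iff_false, iff_false]
    grind [IsIsolated]
  · simp only [sup_adj, edge_adj]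
    grind [IsIsolated, adj_symm]
  · intro x y _ _ _ _
    simp only [sup_adj, edge_adj]
    grind
  · intro x _ _
    simp only [sup_adj, edge_adj]
    grind [IsIsolated]

theorem mem_of_reachable_inducedOn {H : SimpleGraph ℕ} {s : Set ℕ} {x y : ℕ}
    (hxy : (inducedOn H s).Reachable x y) (hne : x ≠ y) : x ∈ s := by
  obtain ⟨w⟩ := hxy
  cases w with
  | nil => exact absurd rfl hne
  | cons h _ => exact h.2.1

theorem is2ClubGraph_inducedOn_pair (H : SimpleGraph ℕ) (a b : ℕ) :
    Is2ClubGraph (inducedOn H {a, b}) := by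
  intro x y hxy
  obtain rfl | hne := eq_or_ne x y
  · simp
  have hx := mem_of_reachable_inducedOn hxy hne
  have hy := mem_of_reachable_inducedOn hxy.symm hne.symm
  obtain ⟨w⟩ := hxy
  cases w with
  | nil => exact absurd rfl hne
  | @cons _ z _ h _ =>
    have hzy : z = y := by
      have hz := h.2.2
      simp only [Set.mem_insert_iff, Set.mem_singleton_iff] at hx hy hz
      grind [h.ne]
    subst hzy
    exact (dist_eq_one_iff_adj.2 h).le.trans one_le_two

theorem stmt1 (G : SimpleGraph ℕ) (u v u' v' : ℕ) (huv : G.Adj u v)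
    (hu' : u' ∉ G.support) (hv' : v' ∉ G.support) (hne : u' ≠ v') :
    ∃ H1 H2 : SimpleGraph ℕ,
      IsSplitAt u u' G H1 ∧ IsSplitAt v v' H1 H2 ∧
      H1.neighborSet u' = {v} ∧ H2.neighborSet v' = {u'} ∧
      (∀ x y : ℕ, H2.Adj x y ↔
        ((G.deleteEdges {s(u, v)}).Adj x y ∨ (x = u' ∧ y = v') ∨ (x = v' ∧ y = u'))) ∧
      Is2ClubGraph (inducedOn H2 {u', v'}) := by
  have hu : u ∈ G.support := ⟨v, huv⟩
  have hv : v ∈ G.support := ⟨u, huv.symm⟩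
  have huu' : u ≠ u' := ne_of_mem_of_not_mem hu hu'
  have hvu' : v ≠ u' := ne_of_mem_of_not_mem hv hu'
  have hvv' : v ≠ v' := ne_of_mem_of_not_mem hv hv'
  set K := G.deleteEdges {s(u, v)}
  have hKu' : K.IsIsolated u' := fun x h => hu' ⟨x, deleteEdges_le _ h⟩
  have hKv' : K.IsIsolated v' := fun x h => hv' ⟨x, deleteEdges_le _ h⟩
  refine ⟨K ⊔ edge u' v, K ⊔ edge u' v', ?_, ?_, hKu'.neighborSet_sup_edge hvu'.symm, ?_, ?_,
    is2ClubGraph_inducedOn_pair _ _ _⟩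
  · convert isSplitAt_sup_edge huu' huv.ne hvu'.symm hKu'
    exact (deleteEdges_sup_edge_of_adj huv).symm
  · rw [edge_comm u' v, edge_comm u' v']
    exact isSplitAt_sup_edge hvv' hvu' hne.symm hKv'
  · rw [edge_comm]
    exact hKv'.neighborSet_sup_edge hne.symm
  · intro x y
    simp only [sup_adj, edge_adj]
    grind
end

section
/- In the cycle C_n on n vertices (n ≥ 6), any sequence of vertex splits that turns C_n into a disjoint union of 2-clubs must split at least ⌈n/2⌉ distinct vertices; in particular, for n = 6a, at least 3a vertices of the cycle must be split. -/
open SimpleGraph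

/-!
Every sequence of splits comes with a homomorphism `φ` from the final graph to `C_n` that merges
each copy back into the vertex it was split from. At a vertex `i` that is never split, `i` is its
own only preimage and both cycle edges at `i` lift. If `i` and `i + 1` were both unsplit, lifting
the path `i - 1, i, i + 1, i + 2` would put preimages of `i - 1` and `i + 2` in one component;
these lie at distance `3` in `C_n` for `n ≥ 6`, and `φ` cannot shorten walks, so the final graph
is not a union of 2-clubs. Hence the split vertices meet every edge of `C_n`, and such a vertex
cover has at least `⌈n/2⌉` elements.
-/

section VertexSplit

variable {V : Type*} {G H : SimpleGraph V}

def IsUnsplitAt (φ : H →g G) (i : V) : Prop :=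
  (∀ x, φ x = i → x = i) ∧ ∀ y, G.Adj i y → ∃ x, H.Adj i x ∧ φ x = y

lemma isUnsplitAt_id (i : V) : IsUnsplitAt (Hom.id : G →g G) i :=
  ⟨fun _ h => h, fun y h => ⟨y, h, rfl⟩⟩

lemma IsUnsplitAt.comp {K : SimpleGraph V} {φ : G →g K} {ψ : H →g G} {i : V}
    (hφ : IsUnsplitAt φ i) (hψ : IsUnsplitAt ψ i) : IsUnsplitAt (φ.comp ψ) i := by
  refine ⟨fun x hx => hψ.1 x (hφ.1 _ hx), fun y hy => ?_⟩
  obtain ⟨z, hiz, rfl⟩ := hφ.2 y hy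
  obtain ⟨x, hix, rfl⟩ := hψ.2 z hiz
  exact ⟨x, hix, rfl⟩

lemma IsSplitAt.exists_hom {v v' : V} (hs : IsSplitAt v v' G H) :
    ∃ φ : H →g G, ∀ i, i ≠ v → IsUnsplitAt φ i := by
  classical
  obtain ⟨hne, hiso, hnadj, hkeep, hsplit⟩ := hs
  have hv' : ∀ x, ¬ G.Adj v' x := fun x hx =>
    (Set.eq_empty_iff_forall_notMem.mp hiso x) hx
  let m : V → V := fun x => if x = v' then v else x
  have hm : ∀ x, m x = v ↔ x = v ∨ x = v' := by
    intro x; by_cases hx : x = v' <;> simp [m, hx]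
  have hm_of_ne : ∀ x, m x ≠ v → m x = x := by
    intro x hx; by_cases h : x = v' <;> simp_all [m]
  have hcopy : ∀ w x, m w = v → m x ≠ v → H.Adj w x → G.Adj v x := by
    intro w x hw hx hwx
    obtain ⟨hxv, hxv'⟩ := not_or.mp ((hm x).not.mp hx)
    refine (hsplit x hxv hxv').mp ?_
    rcases (hm w).mp hw with rfl | rfl
    exacts [Or.inl hwx, Or.inr hwx]
  have hmap : ∀ x y, H.Adj x y → G.Adj (m x) (m y) := by
    intro x y hxy
    by_cases hx : m x = v <;> by_cases hy : m y = v
    · exfalso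
      rcases (hm x).mp hx with rfl | rfl <;> rcases (hm y).mp hy with rfl | rfl
      exacts [hxy.ne rfl, hnadj hxy, hnadj hxy.symm, hxy.ne rfl]
    · rw [hx, hm_of_ne y hy]; exact hcopy x y hx hy hxy
    · rw [hy, hm_of_ne x hx]; exact (hcopy y x hy hx hxy.symm).symm
    · rw [hm_of_ne x hx, hm_of_ne y hy]
      obtain ⟨hxv, hxv'⟩ := not_or.mp ((hm x).not.mp hx)
      obtain ⟨hyv, hyv'⟩ := not_or.mp ((hm y).not.mp hy)
      exact (hkeep x y hxv hxv' hyv hyv').mp hxy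
  refine ⟨⟨m, hmap _ _⟩, fun i hiv => ⟨fun x hx => ?_, fun y hiy => ?_⟩⟩
  · change m x = i at hx
    exact (hm_of_ne x (hx ▸ hiv)).symm.trans hx
  · have hiv' : i ≠ v' := fun h => hv' y (h ▸ hiy)
    by_cases hyv : y = v
    · subst hyv
      rcases (hsplit i hiv hiv').mpr hiy.symm with h | h
      · exact ⟨y, h.symm, by simp [m, hne]⟩
      · exact ⟨v', h.symm, by simp [m]⟩
    · have hyv' : y ≠ v' := fun h => hv' i (h ▸ hiy.symm)
      exact ⟨y, (hkeep i y hiv hiv' hyv hyv').mpr hiy, by simp [m, hyv']⟩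

end VertexSplit

lemma OpsApply.exists_hom {l : List Op} {G H : SimpleGraph ℕ} (hops : ∀ o ∈ l, IsSplitOp o)
    (happ : OpsApply l G H) : ∃ φ : H →g G, ∀ i ∉ splitVerts l, IsUnsplitAt φ i := by
  induction l generalizing G with
  | nil => subst happ; exact ⟨Hom.id, fun i _ => isUnsplitAt_id i⟩
  | cons o l ih =>
    obtain ⟨G', hG', happ'⟩ := happ
    obtain ⟨ψ, hψ⟩ := ih (fun o ho => hops o (List.mem_cons_of_mem _ ho)) happ'
    cases o with
    | del u v => exact (hops _ List.mem_cons_self).elim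
    | split v v' =>
      obtain ⟨μ, hμ⟩ := IsSplitAt.exists_hom hG'
      refine ⟨μ.comp ψ, fun i hi => (hμ i ?_).comp (hψ i ?_)⟩
      · rintro rfl; exact hi ⟨v', List.mem_cons_self⟩
      · rintro ⟨w', hw'⟩; exact hi ⟨w', List.mem_cons_of_mem _ hw'⟩

lemma cycleG_adj_of_cast_eq_add_one {n x y : ℕ} (hn : 2 ≤ n) (hx : x < n) (hy : y < n)
    (h : (y : ZMod n) = x + 1) : (cycleG n).Adj x y := by
  refine (fromRel_adj _ _ _).mpr ⟨?_, Or.inl ⟨hx, ?_⟩⟩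
  · rintro rfl
    have h1 : ((1 : ℕ) : ZMod n) = 0 := by simpa using h
    rw [ZMod.natCast_eq_zero_iff] at h1
    have := Nat.le_of_dvd one_pos h1
    omega
  · rw [← Nat.mod_eq_of_lt hy, ← ZMod.natCast_eq_natCast_iff']
    push_cast; exact h

lemma cast_eq_add_one_of_cycleG_adj {n x y : ℕ} (h : (cycleG n).Adj x y) :
    (y : ZMod n) = x + 1 ∨ (x : ZMod n) = y + 1 := by
  rcases ((fromRel_adj _ _ _).mp h).2 with ⟨_, rfl⟩ | ⟨_, rfl⟩
  · left; rw [ZMod.natCast_mod]; push_cast; ring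
  · right; rw [ZMod.natCast_mod]; push_cast; ring

lemma exists_abs_le_length_of_cycleG_walk {n x y : ℕ} (p : (cycleG n).Walk x y) :
    ∃ k : ℤ, |k| ≤ p.length ∧ (y : ZMod n) = x + k := by
  induction p with
  | nil => exact ⟨0, by simp, by simp⟩
  | cons h p ih =>
    obtain ⟨k, hk, hyk⟩ := ih
    rw [Walk.length_cons, Nat.cast_succ]
    rcases cast_eq_add_one_of_cycleG_adj h with e | e
    · refine ⟨k + 1, (abs_add_le _ _).trans (by simpa using hk), ?_⟩
      rw [hyk, e]; push_cast; ring
    · refine ⟨k - 1, (abs_sub _ _).trans (by simpa using hk), ?_⟩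
      rw [hyk, e]; push_cast; ring

lemma not_isUnsplitAt_and_succ {n i : ℕ} (hn : 6 ≤ n) (hi : i < n) {H : SimpleGraph ℕ}
    (φ : H →g cycleG n) (hH : Is2ClubGraph H) :
    ¬ (IsUnsplitAt φ i ∧ IsUnsplitAt φ ((i + 1) % n)) := by
  rintro ⟨h₀, h₁⟩
  have hn₂ : 2 ≤ n := by omega
  have hmod : ∀ m, m % n < n := fun m => Nat.mod_lt _ (by omega)
  have hpred : ((n - 1 : ℕ) : ZMod n) = -1 := by
    rw [Nat.cast_sub (by omega), ZMod.natCast_self]; simp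
  have hprev : (cycleG n).Adj i ((i + (n - 1)) % n) :=
    (cycleG_adj_of_cast_eq_add_one hn₂ (hmod _) hi
      (by rw [ZMod.natCast_mod]; push_cast [hpred]; ring)).symm
  have hnext : ∀ j < n, (cycleG n).Adj j ((j + 1) % n) := fun j hj =>
    cycleG_adj_of_cast_eq_add_one hn₂ hj (hmod _) (by rw [ZMod.natCast_mod]; push_cast; ring)
  obtain ⟨a, hia, ha⟩ := h₀.2 _ hprev
  obtain ⟨b, hib, hb⟩ := h₀.2 _ (hnext i hi)
  obtain rfl : b = (i + 1) % n := h₁.1 b hb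
  obtain ⟨c, hbc, hc⟩ := h₁.2 _ (hnext _ (hmod _))
  have hac : H.Reachable a c := hia.symm.reachable.trans (hib.reachable.trans hbc.reachable)
  obtain ⟨p, hp⟩ := hac.exists_walk_length_eq_dist
  obtain ⟨k, hk, hck⟩ := exists_abs_le_length_of_cycleG_walk (p.map φ)
  rw [Walk.length_map, hp] at hk
  have hk₂ : |k| ≤ 2 := hk.trans (by exact_mod_cast hH a c hac)
  rw [ha, hc] at hck
  simp only [ZMod.natCast_mod, Nat.cast_add, hpred, Nat.cast_one] at hck
  have h3k : ((3 - k : ℤ) : ZMod n) = 0 := by push_cast; linear_combination hck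
  rw [ZMod.intCast_zmod_eq_zero_iff_dvd] at h3k
  have := Int.le_of_dvd (by linarith [le_abs_self k]) h3k
  linarith [neg_abs_le k]

/-- Every `i < n` is charged to a vertex of `S` (itself or its successor), and each vertex of `S`
is charged at most twice. -/
lemma le_ncard_of_forall_mem_or_succ_mem {n : ℕ} {S : Set ℕ}
    (h : ∀ i < n, i ∈ S ∨ (i + 1) % n ∈ S) : (n + 1) / 2 ≤ (S ∩ {i | i < n}).ncard := by
  classical
  let charge : ℕ → ℕ × Bool := fun i =>
    (if i ∈ S then i else (i + 1) % n, decide (i ∈ S))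
  have hle : (Set.Iio n).ncard ≤ ((S ∩ {i | i < n}) ×ˢ (Set.univ : Set Bool)).ncard := by
    refine Set.ncard_le_ncard_of_injOn charge ?_ ?_
      (((Set.finite_Iio n).inter_of_right S).prod Set.finite_univ)
    · intro i (hi : i < n)
      by_cases hiS : i ∈ S
      · simp [charge, hiS, hi]
      · simp [charge, hiS, (h i hi).resolve_left hiS, Nat.mod_lt _ (Nat.zero_lt_of_lt hi)]
    · intro x (hx : x < n) y (hy : y < n) hxy
      simp only [charge, Prod.mk.injEq, decide_eq_decide] at hxy
      obtain ⟨hval, hmem⟩ := hxy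
      by_cases hxS : x ∈ S
      · simpa [hxS, hmem.mp hxS] using hval
      · rw [if_neg hxS, if_neg (hmem.not.mp hxS)] at hval
        exact (Nat.ModEq.add_right_cancel' 1 hval).eq_of_lt_of_lt hx hy
  rw [Set.ncard_prod, Set.ncard_Iio_nat, Set.ncard_univ, Nat.card_eq_fintype_card,
    Fintype.card_bool] at hle
  omega

theorem stmt10 (n : ℕ) (hn : 6 ≤ n) (l : List Op) (H : SimpleGraph ℕ)
    (hops : ∀ o ∈ l, IsSplitOp o) (happ : OpsApply l (cycleG n) H)
    (h2 : Is2ClubGraph H) :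
    (n + 1) / 2 ≤ Set.ncard (splitVerts l ∩ {i | i < n}) := by
  obtain ⟨φ, hφ⟩ := happ.exists_hom hops
  refine le_ncard_of_forall_mem_or_succ_mem fun i hi => ?_
  by_contra hsplit
  obtain ⟨hi₀, hi₁⟩ := not_or.mp hsplit
  exact not_isUnsplitAt_and_succ hn hi φ h2 ⟨hφ i hi₀, hφ _ hi₁⟩
end

section
/- If a connected graph G has diameter at least 3, then in any graph obtained from G by a minimal sequence of vertex splits resulting in a disjoint union of 2-clubs, at least one vertex lying on a geodesic of length 3 in G (one of the two interior vertices) must be split. -/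
open SimpleGraph

/-
If neither interior vertex `u`, `v` of a geodesic `x, u, v, y` is split, then `u` keeps the edge
to `v` and some copy of each of its neighbours, and likewise for `v`; so `H` contains a walk
`x', u, v, y'` with `x'`, `y'` copies of `x`, `y`. Mapping every copy back to its original vertex
is a graph homomorphism `H →g G`, hence does not increase distances, so the 2-club property of
`H` would give `d(x, y) ≤ 2`.
-/

theorem SimpleGraph.Reachable.exists_geodesic_three {V : Type*} {G : SimpleGraph V} {a b : V}
    (hab : G.Reachable a b) (h3 : 3 ≤ G.dist a b) :
    ∃ x u v y, G.Adj x u ∧ G.Adj u v ∧ G.Adj v y ∧ G.dist x y = 3 := by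
  obtain ⟨p, hp⟩ := hab.exists_walk_length_eq_dist
  refine ⟨a, p.getVert 1, p.getVert 2, p.getVert 3, ?_, p.adj_getVert_succ (by omega),
    p.adj_getVert_succ (by omega), ?_⟩
  · simpa using p.adj_getVert_succ (i := 0) (by omega)
  · rw [← length_eq_dist_of_subwalk hp (p.isSubwalk_take 3), Walk.take_length]
    omega

def mergeCopies {V : Type*} [DecidableEq V] (v v' : V) (a : V) : V :=
  if a = v' then v else a

namespace IsSplitAt

variable {V : Type*} {v v' a b x : V} {G H : SimpleGraph V}

theorem not_adj_copy (h : IsSplitAt v v' G H) (x : V) : ¬ G.Adj v' x := fun hx =>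
  (h.2.1 ▸ hx : x ∈ (∅ : Set V))

theorem adj_of_ne (h : IsSplitAt v v' G H) {y : V} (hx : x ≠ v) (hy : y ≠ v)
    (hxy : G.Adj x y) : H.Adj x y :=
  (h.2.2.2.1 x y hx (fun e => h.not_adj_copy y (e ▸ hxy)) hy
    (fun e => h.not_adj_copy x (e ▸ hxy.symm))).mpr hxy

variable [DecidableEq V]

theorem adj_mergeCopies_of_ne (h : IsSplitAt v v' G H) (hb : b ≠ v) (hb' : b ≠ v')
    (hab : H.Adj a b) : G.Adj (mergeCopies v v' a) b := by
  obtain ⟨hvv', -, -, hrest, hsplit⟩ := h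
  by_cases ha' : a = v'
  · subst ha'
    simpa [mergeCopies] using (hsplit b hb hb').mp (Or.inr hab)
  by_cases ha : a = v
  · subst ha
    simpa [mergeCopies, hvv'] using (hsplit b hb hb').mp (Or.inl hab)
  simpa [mergeCopies, ha'] using (hrest a b ha ha' hb hb').mp hab

theorem adj_mergeCopies (h : IsSplitAt v v' G H) (hab : H.Adj a b) :
    G.Adj (mergeCopies v v' a) (mergeCopies v v' b) := by
  by_cases hb : b = v ∨ b = v'
  · by_cases ha : a = v ∨ a = v'
    · have hv : ¬ H.Adj v v' := h.2.2.1
      rcases ha with rfl | rfl <;> rcases hb with rfl | rfl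
      exacts [(hab.ne rfl).elim, absurd hab hv, absurd hab.symm hv, (hab.ne rfl).elim]
    · push Not at ha
      simpa [mergeCopies, ha.2] using (h.adj_mergeCopies_of_ne ha.1 ha.2 hab.symm).symm
  · push Not at hb
    simpa [mergeCopies, hb.2] using h.adj_mergeCopies_of_ne hb.1 hb.2 hab

theorem exists_adj_mergeCopies_eq (h : IsSplitAt v v' G H) (hx : x ≠ v) (hxb : G.Adj x b) :
    ∃ c, H.Adj x c ∧ mergeCopies v v' c = b := by
  have hx' : x ≠ v' := fun e => h.not_adj_copy b (e ▸ hxb)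
  by_cases hb : b = v
  · subst hb
    rcases (h.2.2.2.2 x hx hx').mpr hxb.symm with hc | hc
    · exact ⟨b, hc.symm, by simp [mergeCopies, h.1]⟩
    · exact ⟨v', hc.symm, by simp [mergeCopies]⟩
  · have hb' : b ≠ v' := fun e => h.not_adj_copy x (e ▸ hxb.symm)
    exact ⟨b, h.adj_of_ne hx hb hxb, by simp [mergeCopies, hb']⟩

end IsSplitAt

def unsplitMap : List Op → ℕ → ℕ
  | [] => id
  | Op.split v v' :: l => mergeCopies v v' ∘ unsplitMap l
  | Op.del _ _ :: l => unsplitMap l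

theorem splitVerts_cons_split (v v' : ℕ) (l : List Op) :
    splitVerts (Op.split v v' :: l) = insert v (splitVerts l) := by
  ext u
  simp only [splitVerts, List.mem_cons, Op.split.injEq, Set.mem_insert_iff, Set.mem_ofPred_eq]
  grind

namespace OpsApply

variable {l : List Op} {G H : SimpleGraph ℕ}

theorem adj_unsplitMap (happ : OpsApply l G H) {a b : ℕ} (hab : H.Adj a b) :
    G.Adj (unsplitMap l a) (unsplitMap l b) := by
  induction l generalizing G with
  | nil => subst happ; exact hab
  | cons o t ih =>
    obtain ⟨G', hop, happ'⟩ := happ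
    cases o with
    | del _ _ => exact (hop.2 ▸ ih happ').1
    | split v v' => exact hop.adj_mergeCopies (ih happ')

theorem dist_unsplitMap_le (happ : OpsApply l G H) {a b : ℕ} (hr : H.Reachable a b) :
    G.dist (unsplitMap l a) (unsplitMap l b) ≤ H.dist a b := by
  obtain ⟨p, hp⟩ := hr.exists_walk_length_eq_dist
  let f : H →g G := ⟨unsplitMap l, happ.adj_unsplitMap⟩
  rw [← hp, ← p.length_map f]
  exact dist_le _

theorem adj_of_notMem_splitVerts (hops : ∀ o ∈ l, IsSplitOp o) (happ : OpsApply l G H)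
    {u v : ℕ} (hu : u ∉ splitVerts l) (hv : v ∉ splitVerts l) (huv : G.Adj u v) :
    H.Adj u v := by
  induction l generalizing G with
  | nil => subst happ; exact huv
  | cons o t ih =>
    obtain ⟨G', hop, happ'⟩ := happ
    cases o with
    | del _ _ => exact (hops _ List.mem_cons_self).elim
    | split w w' =>
      simp only [splitVerts_cons_split, Set.mem_insert_iff, not_or] at hu hv
      exact ih (fun o ho => hops o (List.mem_cons_of_mem _ ho)) happ' hu.2 hv.2
        (hop.adj_of_ne hu.1 hv.1 huv)

theorem exists_adj_unsplitMap_eq (hops : ∀ o ∈ l, IsSplitOp o) (happ : OpsApply l G H)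
    {u b : ℕ} (hu : u ∉ splitVerts l) (hub : G.Adj u b) :
    ∃ c, H.Adj u c ∧ unsplitMap l c = b := by
  induction l generalizing G b with
  | nil => subst happ; exact ⟨b, hub, rfl⟩
  | cons o t ih =>
    obtain ⟨G', hop, happ'⟩ := happ
    cases o with
    | del _ _ => exact (hops _ List.mem_cons_self).elim
    | split w w' =>
      simp only [splitVerts_cons_split, Set.mem_insert_iff, not_or] at hu
      obtain ⟨c', hc', rfl⟩ := hop.exists_adj_mergeCopies_eq hu.1 hub
      obtain ⟨c, hc, rfl⟩ := ih (fun o ho => hops o (List.mem_cons_of_mem _ ho)) happ' hu.2 hc'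
      exact ⟨c, hc, rfl⟩

end OpsApply

theorem stmt13_general (G : SimpleGraph ℕ)
    (hdiam : ∃ x y : ℕ, G.Reachable x y ∧ 3 ≤ G.dist x y)
    (l : List Op) (H : SimpleGraph ℕ) (hops : ∀ o ∈ l, IsSplitOp o)
    (happ : OpsApply l G H) (h2 : Is2ClubGraph H) :
    ∃ x u v y : ℕ, G.Adj x u ∧ G.Adj u v ∧ G.Adj v y ∧ G.dist x y = 3 ∧
      (u ∈ splitVerts l ∨ v ∈ splitVerts l) := by
  obtain ⟨a, b, hab, h3⟩ := hdiam
  obtain ⟨x, u, v, y, hxu, huv, hvy, hxy⟩ := hab.exists_geodesic_three h3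
  refine ⟨x, u, v, y, hxu, huv, hvy, hxy, ?_⟩
  by_contra! hunsplit
  obtain ⟨x', hux', rfl⟩ := happ.exists_adj_unsplitMap_eq hops hunsplit.1 hxu.symm
  obtain ⟨y', hvy', rfl⟩ := happ.exists_adj_unsplitMap_eq hops hunsplit.2 hvy
  have huvH : H.Adj u v := happ.adj_of_notMem_splitVerts hops hunsplit.1 hunsplit.2 huv
  have hreach : H.Reachable x' y' :=
    (hux'.symm.reachable.trans huvH.reachable).trans hvy'.reachable
  have := happ.dist_unsplitMap_le hreach
  have := h2 x' y' hreach
  omega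

theorem stmt13 (G : SimpleGraph ℕ) (hfin : G.support.Finite)
    (hconn : (G.induce G.support).Connected)
    (hdiam : ∃ x y : ℕ, G.Reachable x y ∧ 3 ≤ G.dist x y)
    (l : List Op) (H : SimpleGraph ℕ) (hops : ∀ o ∈ l, IsSplitOp o)
    (happ : OpsApply l G H) (h2 : Is2ClubGraph H)
    (hmin : ∀ (l' : List Op) (H' : SimpleGraph ℕ), l'.Sublist l → l'.length < l.length →
      OpsApply l' G H' → ¬ Is2ClubGraph H') :
    ∃ x u v y : ℕ, G.Adj x u ∧ G.Adj u v ∧ G.Adj v y ∧ G.dist x y = 3 ∧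
      (u ∈ splitVerts l ∨ v ∈ splitVerts l) :=
  stmt13_general G hdiam l H hops happ h2
end

section
/- Any sequence of edge deletions and vertex splits turning a graph G into a disjoint union of 2-clubs can be reordered so that all edge deletions are performed before all vertex splits, without changing the total number of operations or the final graph. -/
open SimpleGraph

/-! A split followed by an edge deletion can be commuted: the deleted edge either comes from an
edge present before the split, which is then deleted first, or the split alone already yields the
result, and a trivial split (whose new copy stays isolated) keeps the operation count. Bubbling each
split past the deletions after it, by induction on the sequence, puts all deletions first. -/

lemma opsApply_append {l₁ l₂ : List Op} {G H : SimpleGraph ℕ} :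
    OpsApply (l₁ ++ l₂) G H ↔ ∃ K, OpsApply l₁ G K ∧ OpsApply l₂ K H := by
  induction l₁ generalizing G with
  | nil => simp [OpsApply]
  | cons o l ih => simp only [List.cons_append, OpsApply, ih]; aesop

lemma OpsApply.le_of_forall_not_isSplitOp {l : List Op} {G H : SimpleGraph ℕ}
    (h : OpsApply l G H) (hl : ∀ o ∈ l, ¬ IsSplitOp o) : H ≤ G := by
  induction l generalizing G with
  | nil => exact (show H = G from h).le
  | cons o l ih =>
    obtain ⟨G', hop, htail⟩ := h
    cases o with
    | split => exact absurd trivial (hl _ List.mem_cons_self)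
    | del =>
      rw [hop.2] at htail
      exact (ih htail fun o ho => hl o (List.mem_cons_of_mem _ ho)).trans (deleteEdges_le _)

lemma isSplitAt_self {G : SimpleGraph ℕ} {v v' : ℕ} (hne : v ≠ v')
    (hiso : G.neighborSet v' = ∅) : IsSplitAt v v' G G := by
  have hv' : ∀ z, ¬ G.Adj v' z := fun z h => (Set.eq_empty_iff_forall_notMem.mp hiso z) h
  exact ⟨hne, hiso, fun h => hv' v h.symm, fun _ _ _ _ _ _ => Iff.rfl,
    fun x _ _ => or_iff_left (hv' x)⟩

lemma opsApply_replicate_split_self {G : SimpleGraph ℕ} {v v' : ℕ} (hne : v ≠ v')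
    (hiso : G.neighborSet v' = ∅) (n : ℕ) :
    OpsApply (List.replicate n (Op.split v v')) G G := by
  induction n with
  | zero => rfl
  | succ n ih => exact ⟨G, isSplitAt_self hne hiso, ih⟩

/-- The deleted edge `uw` comes from the edge `π u, π w` of `G`, where `π` sends `v'` back to
`v`; the split alone suffices when the twin of `uw` (`v` and `v'` exchanged) is another edge of
`G'`. -/
lemma IsSplitAt.deleteEdge_before {v v' u w : ℕ} {G G' : SimpleGraph ℕ}
    (hs : IsSplitAt v v' G G') (hadj : G'.Adj u w) :
    (∃ p q, G.Adj p q ∧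
        IsSplitAt v v' (G.deleteEdges {s(p, q)}) (G'.deleteEdges {s(u, w)})) ∨
      IsSplitAt v v' G (G'.deleteEdges {s(u, w)}) := by
  obtain ⟨hne, hiso, hnadj, hout, hcov⟩ := hs
  simp only [IsSplitAt, deleteEdges_adj, Set.mem_singleton_iff, Sym2.eq_iff, ne_eq,
    Set.eq_empty_iff_forall_notMem, mem_neighborSet] at *
  by_cases htwin : (u = v ∨ u = v' ∨ w = v ∨ w = v') ∧
      G'.Adj (Equiv.swap v v' u) (Equiv.swap v v' w)
  · right
    simp only [Equiv.swap_apply_def] at htwin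
    refine ⟨hne, hiso, by grind, by grind, fun x hx hx' => ?_⟩
    have := hcov x hx hx'
    grind [SimpleGraph.adj_comm]
  · left
    simp only [Equiv.swap_apply_def] at htwin
    refine ⟨if u = v' then v else u, if w = v' then v else w, ?_, hne, by grind, by grind,
      by grind, fun x hx hx' => ?_⟩
    · have := hcov u; have := hcov w; have := hout u w; have := G'.ne_of_adj hadj
      grind [SimpleGraph.adj_comm]
    · have := hcov x hx hx'
      grind [SimpleGraph.adj_comm]

lemma IsSplitAt.exists_deletions_before {v v' : ℕ} {G G' H : SimpleGraph ℕ} {d : List Op}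
    (hs : IsSplitAt v v' G G') (hd : ∀ o ∈ d, ¬ IsSplitOp o) (h : OpsApply d G' H) :
    ∃ d' : List Op, (∀ o ∈ d', ¬ IsSplitOp o) ∧ d'.length ≤ d.length ∧
      ∃ K, OpsApply d' G K ∧ IsSplitAt v v' K H := by
  induction d generalizing G G' with
  | nil => exact ⟨[], by simp, le_rfl, G, rfl, (show H = G' from h) ▸ hs⟩
  | cons o d ih =>
    obtain ⟨G'', hop, htail⟩ := h
    have hd' : ∀ o ∈ d, ¬ IsSplitOp o := fun o ho => hd o (List.mem_cons_of_mem _ ho)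
    cases o with
    | split => exact absurd trivial (hd _ List.mem_cons_self)
    | del u w =>
      obtain ⟨hadj, rfl⟩ := hop
      rcases hs.deleteEdge_before hadj with ⟨p, q, hpq, hs'⟩ | hs'
      · obtain ⟨d', hd'', hlen, K, hK, hsK⟩ := ih hs' hd' htail
        refine ⟨Op.del p q :: d', ?_, by simpa using hlen, K, ⟨_, ⟨hpq, rfl⟩, hK⟩, hsK⟩
        simpa [IsSplitOp] using hd''
      · obtain ⟨d', hd'', hlen, hK⟩ := ih hs' hd' htail
        exact ⟨d', hd'', hlen.trans (Nat.le_succ _), hK⟩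

/-- The trivial splits `Op.split v v'` make up for the deletions that became unnecessary. -/
lemma IsSplitAt.exists_deletions_then_splits {v v' : ℕ} {G G' H : SimpleGraph ℕ}
    {d : List Op} (hs : IsSplitAt v v' G G') (hd : ∀ o ∈ d, ¬ IsSplitOp o)
    (h : OpsApply d G' H) :
    ∃ d' s : List Op, (∀ o ∈ d', ¬ IsSplitOp o) ∧ (∀ o ∈ s, IsSplitOp o) ∧
      d'.length + s.length = d.length + 1 ∧ OpsApply (d' ++ s) G H := by
  obtain ⟨d', hd', hlen, K, hK, hsK⟩ := hs.exists_deletions_before hd h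
  have hKiso : K.neighborSet v' = ∅ :=
    Set.subset_empty_iff.mp (hs.2.1 ▸ neighborSet_mono (hK.le_of_forall_not_isSplitOp hd') v')
  refine ⟨d', List.replicate (d.length - d'.length) (Op.split v v') ++ [Op.split v v'], hd', ?_,
    ?_, opsApply_append.mpr ⟨K, hK, opsApply_append.mpr
      ⟨K, opsApply_replicate_split_self hs.1 hKiso _, H, hsK, rfl⟩⟩⟩
  · simp only [List.mem_append, List.mem_replicate, List.mem_singleton]
    rintro o (⟨-, rfl⟩ | rfl) <;> trivial
  · simp only [List.length_append, List.length_replicate, List.length_singleton]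
    omega

theorem stmt16_general (G H : SimpleGraph ℕ) (l : List Op) (happ : OpsApply l G H) :
    ∃ l1 l2 : List Op, (∀ o ∈ l1, ¬ IsSplitOp o) ∧ (∀ o ∈ l2, IsSplitOp o) ∧
      (l1 ++ l2).length = l.length ∧ OpsApply (l1 ++ l2) G H := by
  induction l generalizing G with
  | nil => exact ⟨[], [], by simp, by simp, rfl, happ⟩
  | cons o l ih =>
    obtain ⟨G', hop, htail⟩ := happ
    obtain ⟨l1, l2, hl1, hl2, hlen, happ'⟩ := ih G' htail
    cases o with
    | del u w =>
      refine ⟨Op.del u w :: l1, l2, ?_, hl2, by simpa using hlen, G', hop, happ'⟩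
      simpa [IsSplitOp] using hl1
    | split v v' =>
      obtain ⟨K, h1, h2⟩ := opsApply_append.mp happ'
      obtain ⟨d, s, hd, hs, hlen', hds⟩ := hop.exists_deletions_then_splits hl1 h1
      obtain ⟨K', hdK, hsK⟩ := opsApply_append.mp hds
      refine ⟨d, s ++ l2, hd, ?_, ?_,
        opsApply_append.mpr ⟨K', hdK, opsApply_append.mpr ⟨K, hsK, h2⟩⟩⟩
      · simpa [or_imp, forall_and] using ⟨hs, hl2⟩
      · simp only [List.length_append, List.length_cons] at *; omega

theorem stmt16 (G H : SimpleGraph ℕ) (l : List Op) (happ : OpsApply l G H)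
    (h2 : Is2ClubGraph H) :
    ∃ l1 l2 : List Op, (∀ o ∈ l1, ¬ IsSplitOp o) ∧ (∀ o ∈ l2, IsSplitOp o) ∧
      (l1 ++ l2).length = l.length ∧ OpsApply (l1 ++ l2) G H :=
  stmt16_general G H l happ
end
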